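/- Let f ∈ ℝ⟦X⟧ have constant coefficient 0 and nonzero linear coefficient, and let h = X·(1−X)⁻¹ ∈ ℝ⟦X⟧ (the series z/(1−z)). Then f∘h = h∘f if and only if there exists r ∈ ℝ such that f = X·(1−r·X)⁻¹. -/

import Mathlib

/-!
The series `moebius r = X/(1 - rX)` satisfy `moebius r ∘ moebius s = moebius (r + s)`, because
`(1 - rX) · moebius r = X` is preserved by substitution; hence they commute with each other.

Conversely, let `f` and `g` both commute with `m = moebius s` (`s ≠ 0`) and agree to order `n`,
and put `d = f - g`. In degree `n + 1`, `d ∘ m` has coefficient `d_{n+1} + n s d_n`, while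
`m ∘ f - m ∘ g` has coefficient `d_{n+1} + s (f_1 + g_1) d_n`, since
`(1 - s f)(1 - s g)(m ∘ f - m ∘ g) = f - g`. So `(n - f_1 - g_1) d_n = 0`. With `g = 0`, `n = 1`
this forces `f_1 = 1`; with `g = moebius f_2`, which agrees with `f` to order `3`, it shows
inductively that `f = g`.
-/

open PowerSeries

/-- Substitution (composition) of formal power series: `psComp g f = g ∘ f`,
the substitution of `f` into `g`.  When `f` has zero constant coefficient, the
`n`-th coefficient of `g ∘ f` is `∑_{k=0}^{n} g_k · [zⁿ] fᵏ`. -/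
noncomputable def psComp (g f : PowerSeries ℝ) : PowerSeries ℝ :=
  PowerSeries.mk fun n => ∑ k ∈ Finset.range (n + 1),
    PowerSeries.coeff k g * PowerSeries.coeff n (f ^ k)

theorem coeff_pow_eq_zero_of_lt {R : Type*} [CommSemiring R] {f : R⟦X⟧}
    (hf : constantCoeff f = 0) {n k : ℕ} (h : n < k) : coeff n (f ^ k) = 0 :=
  X_pow_dvd_iff.mp (pow_dvd_pow_of_dvd (X_dvd_iff.mpr hf) k) n h

theorem coeff_succ_mul_of_X_pow_dvd {R : Type*} [CommSemiring R] {φ ψ : R⟦X⟧} {n : ℕ}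
    (hψ : X ^ n ∣ ψ) :
    coeff (n + 1) (φ * ψ) = constantCoeff φ * coeff (n + 1) ψ + coeff 1 φ * coeff n ψ := by
  obtain ⟨q, rfl⟩ := hψ
  simp only [mul_left_comm φ, coeff_X_pow_mul', le_refl, if_true, Nat.sub_self,
    Nat.le_succ, Nat.add_sub_cancel_left, coeff_one_mul, coeff_zero_eq_constantCoeff]
  ring

theorem coeff_mul_of_X_pow_dvd {R : Type*} [CommSemiring R] {φ ψ : R⟦X⟧} {n : ℕ}
    (hψ : X ^ n ∣ ψ) : coeff n (φ * ψ) = constantCoeff φ * coeff n ψ := by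
  obtain ⟨q, rfl⟩ := hψ
  simp only [mul_left_comm φ, coeff_X_pow_mul', le_refl, if_true, Nat.sub_self,
    coeff_zero_eq_constantCoeff, map_mul]

theorem psComp_eq_subst (g : ℝ⟦X⟧) {f : ℝ⟦X⟧} (hf : constantCoeff f = 0) :
    psComp g f = g.subst f := by
  ext n
  rw [psComp, coeff_mk, coeff_subst' (HasSubst.of_constantCoeff_zero' hf),
    finsum_eq_sum_of_support_subset _ (s := Finset.range (n + 1)) ?_]
  · rfl
  · intro k hk
    rw [Finset.coe_range, Set.mem_Iio]
    by_contra! hkn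
    exact hk (by simp only [coeff_pow_eq_zero_of_lt hf hkn, smul_zero])

theorem psComp_sub_left (g₁ g₂ f : ℝ⟦X⟧) :
    psComp (g₁ - g₂) f = psComp g₁ f - psComp g₂ f := by
  ext n
  simp only [psComp, coeff_mk, map_sub, sub_mul, Finset.sum_sub_distrib]

section Moebius

variable {K : Type*} [Field K]

noncomputable def moebius (r : K) : K⟦X⟧ := X * (1 - C r * X)⁻¹

theorem constantCoeff_one_sub_C_mul_X (r : K) : constantCoeff (1 - C r * X) = 1 := by simp

theorem constantCoeff_inv_one_sub_C_mul_X (r : K) : constantCoeff (1 - C r * X)⁻¹ = 1 := by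
  rw [constantCoeff_inv, constantCoeff_one_sub_C_mul_X, inv_one]

theorem coeff_one_inv_one_sub_C_mul_X (r : K) : coeff 1 (1 - C r * X)⁻¹ = r := by
  have h := congrArg (coeff 1) (PowerSeries.mul_inv_cancel (1 - C r * X) (by simp))
  rw [coeff_one_mul, constantCoeff_inv_one_sub_C_mul_X, constantCoeff_one_sub_C_mul_X] at h
  simp only [map_sub, coeff_one, one_ne_zero, if_false, coeff_succ_mul_X, coeff_zero_C, mul_one,
    zero_sub] at h
  linear_combination h

theorem one_sub_C_mul_X_mul_moebius (r : K) : (1 - C r * X) * moebius r = X := by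
  rw [moebius, mul_left_comm, PowerSeries.mul_inv_cancel _ (by simp), mul_one]

theorem eq_moebius_of_one_sub_C_mul_X_mul_eq {r : K} {u : K⟦X⟧} (hu : (1 - C r * X) * u = X) :
    u = moebius r := by
  calc u = (1 - C r * X)⁻¹ * ((1 - C r * X) * u) := by
        rw [← mul_assoc, PowerSeries.inv_mul_cancel _ (by simp), one_mul]
    _ = moebius r := by rw [hu, moebius, mul_comm]

theorem constantCoeff_moebius (r : K) : constantCoeff (moebius r) = 0 := by simp [moebius]

theorem coeff_one_moebius (r : K) : coeff 1 (moebius r) = 1 := by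
  rw [moebius, coeff_succ_X_mul, coeff_zero_eq_constantCoeff, constantCoeff_inv_one_sub_C_mul_X]

theorem coeff_two_moebius (r : K) : coeff 2 (moebius r) = r := by
  rw [moebius, coeff_succ_X_mul, coeff_one_inv_one_sub_C_mul_X]

theorem coeff_succ_moebius_pow (r : K) (n : ℕ) : coeff (n + 1) (moebius r ^ n) = n * r := by
  rw [moebius, mul_pow, add_comm, coeff_X_pow_mul, coeff_one_pow,
    coeff_one_inv_one_sub_C_mul_X, constantCoeff_inv_one_sub_C_mul_X, one_pow, mul_one]

theorem coeff_moebius_pow_self (r : K) (n : ℕ) : coeff n (moebius r ^ n) = 1 := by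
  simp only [moebius, mul_pow, coeff_X_pow_mul', le_refl, if_true, Nat.sub_self,
    coeff_zero_eq_constantCoeff, map_pow, constantCoeff_inv_one_sub_C_mul_X, one_pow]

theorem one_sub_C_mul_mul_subst_moebius (r : K) {f : K⟦X⟧} (hf : constantCoeff f = 0) :
    (1 - C r * f) * (moebius r).subst f = f := by
  have ha := HasSubst.of_constantCoeff_zero' hf
  have h := congrArg (subst f) (one_sub_C_mul_X_mul_moebius r)
  rwa [subst_mul ha, subst_sub ha, subst_mul ha, subst_X ha, ← map_one C, subst_C, subst_C] at h

theorem subst_moebius_moebius (r s : K) :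
    (moebius r).subst (moebius s) = moebius (r + s) := by
  apply eq_moebius_of_one_sub_C_mul_X_mul_eq
  have h1 := one_sub_C_mul_X_mul_moebius s
  have h2 := one_sub_C_mul_mul_subst_moebius r (constantCoeff_moebius s)
  rw [map_add]
  linear_combination (1 - C s * X) * h2 + (C r * (moebius r).subst (moebius s) + 1) * h1

end Moebius

theorem coeff_succ_psComp_moebius (s : ℝ) {d : ℝ⟦X⟧} {n : ℕ} (hd : X ^ n ∣ d) :
    coeff (n + 1) (psComp d (moebius s)) = coeff (n + 1) d + n * s * coeff n d := by
  rw [psComp, coeff_mk, Finset.sum_range_succ, Finset.sum_range_succ,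
    Finset.sum_eq_zero fun k hk => by rw [X_pow_dvd_iff.mp hd k (Finset.mem_range.mp hk), zero_mul],
    coeff_succ_moebius_pow, coeff_moebius_pow_self]
  ring

theorem coeff_succ_psComp_moebius_sub_psComp (s : ℝ) {f g : ℝ⟦X⟧} (hf : constantCoeff f = 0)
    (hg : constantCoeff g = 0) {n : ℕ} (hfg : X ^ n ∣ f - g) :
    coeff (n + 1) (psComp (moebius s) f - psComp (moebius s) g) =
      coeff (n + 1) (f - g) + s * (coeff 1 f + coeff 1 g) * coeff n (f - g) := by
  rw [psComp_eq_subst _ hf, psComp_eq_subst _ hg]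
  set w := (1 - C s * f) * (1 - C s * g)
  set D : ℝ⟦X⟧ := (moebius s).subst f - (moebius s).subst g
  have hwD : w * D = f - g := by
    linear_combination (1 - C s * g) * one_sub_C_mul_mul_subst_moebius s hf -
      (1 - C s * f) * one_sub_C_mul_mul_subst_moebius s hg
  have hw0 : constantCoeff w = 1 := by simp [w, hf, hg]
  have hw1 : coeff 1 w = -s * (coeff 1 f + coeff 1 g) := by
    simp only [w, coeff_one_mul, map_sub, map_mul, coeff_C_mul, coeff_one, one_ne_zero,
      if_false, constantCoeff_one, constantCoeff_C, hf, hg]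
    ring
  have hD : X ^ n ∣ D := by
    rwa [← (isUnit_iff_constantCoeff (φ := w)).mpr (hw0 ▸ isUnit_one) |>.dvd_mul_left, hwD]
  rw [← hwD, coeff_succ_mul_of_X_pow_dvd hD, coeff_mul_of_X_pow_dvd hD, hw0, hw1]
  ring

theorem psComp_moebius_comm (r s : ℝ) :
    psComp (moebius r) (moebius s) = psComp (moebius s) (moebius r) := by
  rw [psComp_eq_subst _ (constantCoeff_moebius s), psComp_eq_subst _ (constantCoeff_moebius r),
    subst_moebius_moebius, subst_moebius_moebius, add_comm]

theorem psComp_zero_moebius_comm (s : ℝ) : psComp 0 (moebius s) = psComp (moebius s) 0 := by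
  rw [psComp_eq_subst _ (map_zero _), subst_zero_of_constantCoeff_zero (constantCoeff_moebius s)]
  ext n
  simp [psComp]

theorem mul_coeff_sub_eq_zero_of_psComp_comm (s : ℝ) {f g : ℝ⟦X⟧} (hf0 : constantCoeff f = 0)
    (hg0 : constantCoeff g = 0) (hf : psComp f (moebius s) = psComp (moebius s) f)
    (hg : psComp g (moebius s) = psComp (moebius s) g) {n : ℕ} (hfg : X ^ n ∣ f - g) :
    s * (n - (coeff 1 f + coeff 1 g)) * coeff n (f - g) = 0 := by
  have h := coeff_succ_psComp_moebius s hfg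
  rw [psComp_sub_left, hf, hg, coeff_succ_psComp_moebius_sub_psComp s hf0 hg0 hfg] at h
  linear_combination -h

theorem coeff_one_eq_one_of_psComp_comm {s : ℝ} (hs : s ≠ 0) {f : ℝ⟦X⟧}
    (hf0 : constantCoeff f = 0) (hf1 : coeff 1 f ≠ 0)
    (hf : psComp f (moebius s) = psComp (moebius s) f) : coeff 1 f = 1 := by
  have h := mul_coeff_sub_eq_zero_of_psComp_comm s hf0 (map_zero _) hf
    (psComp_zero_moebius_comm s) (n := 1) (by rwa [sub_zero, pow_one, X_dvd_iff])
  simp only [map_zero, add_zero, sub_zero, Nat.cast_one, mul_eq_zero, hs, hf1, false_or,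
    or_false] at h
  linarith

theorem eq_moebius_of_psComp_comm {s : ℝ} (hs : s ≠ 0) {f : ℝ⟦X⟧}
    (hf0 : constantCoeff f = 0) (hf1 : coeff 1 f ≠ 0)
    (hf : psComp f (moebius s) = psComp (moebius s) f) : f = moebius (coeff 2 f) := by
  have hf1' := coeff_one_eq_one_of_psComp_comm hs hf0 hf1 hf
  have hg := psComp_moebius_comm (coeff 2 f) s
  have hdvd : ∀ n, X ^ (n + 3) ∣ f - moebius (coeff 2 f) := by
    intro n
    induction n with
    | zero =>
      refine X_pow_dvd_iff.mpr fun m hm => ?_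
      interval_cases m <;>
        simp [hf0, hf1', constantCoeff_moebius, coeff_one_moebius, coeff_two_moebius]
    | succ n ih =>
      have h := mul_coeff_sub_eq_zero_of_psComp_comm s hf0 (constantCoeff_moebius _) hf hg ih
      rw [hf1', coeff_one_moebius] at h
      have hn : coeff (n + 3) (f - moebius (coeff 2 f)) = 0 := by
        refine (mul_eq_zero.mp h).resolve_left (mul_ne_zero hs ?_)
        push_cast
        linarith
      refine X_pow_dvd_iff.mpr fun m hm => ?_
      rcases Nat.lt_succ_iff_lt_or_eq.mp hm with hm | rfl
      · exact X_pow_dvd_iff.mp ih m hm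
      · exact hn
  rw [← sub_eq_zero]
  ext n
  exact X_pow_dvd_iff.mp (hdvd n) n (by omega)

theorem stmt4 (f : PowerSeries ℝ)
    (hf0 : constantCoeff f = 0) (hf1 : coeff 1 f ≠ 0)
    (h : PowerSeries ℝ) (hh : h = X * (1 - X)⁻¹) :
    psComp f h = psComp h f ↔ ∃ r : ℝ, f = X * (1 - C r * X)⁻¹ := by
  obtain rfl : h = moebius 1 := by rw [hh, moebius, map_one, one_mul]
  constructor
  · exact fun hcomm => ⟨coeff 2 f, eq_moebius_of_psComp_comm one_ne_zero hf0 hf1 hcomm⟩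
  · rintro ⟨r, rfl⟩
    exact psComp_moebius_comm r 1
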